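/- arXiv:1106.1759 — 3 statements merged into one kernel-verified Lean document; each statement's English description precedes it below -/
import Mathlib

section
/- If the S-module D^{(m)}(A) is free, then its rank equals s_m = binom(n+m-1, m). -/
open MvPolynomial

/-- The linear form `Σ v_j x_j` with coefficient vector `v`. -/
noncomputable def lf {K : Type*} [Field K] {n : ℕ} (v : Fin n → K) :
    MvPolynomial (Fin n) K :=
  ∑ j, MvPolynomial.C (v j) * MvPolynomial.X j

/-- `∂^α = ∂_1^{α_1} ⋯ ∂_n^{α_n}` as a `K`-linear endomorphism of the polynomial ring. -/
noncomputable def pdOp (K : Type*) [Field K] (n : ℕ) (α : Fin n → ℕ) :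
    Module.End K (MvPolynomial (Fin n) K) :=
  (List.ofFn fun j : Fin n =>
    ((MvPolynomial.pderiv j).toLinearMap : Module.End K (MvPolynomial (Fin n) K)) ^ (α j)).prod

/-- The constant coefficient derivation `Σ d_j ∂_j`. -/
noncomputable def delOp (K : Type*) [Field K] (n : ℕ) (d : Fin n → K) :
    Module.End K (MvPolynomial (Fin n) K) :=
  ∑ j, d j • ((MvPolynomial.pderiv j).toLinearMap : Module.End K (MvPolynomial (Fin n) K))

/-- The `S`-module of differential operators homogeneous of order `m`,
i.e. `S`-linear combinations of the `∂^α` with `|α| = m`. -/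
noncomputable def homOrder (K : Type*) [Field K] (n m : ℕ) :
    Submodule (MvPolynomial (Fin n) K) (Module.End K (MvPolynomial (Fin n) K)) :=
  Submodule.span (MvPolynomial (Fin n) K)
    {θ | ∃ α : Fin n → ℕ, (∑ j, α j) = m ∧ θ = pdOp K n α}

/-- The operators preserving the principal ideal `QS`. -/
noncomputable def presIdeal (K : Type*) [Field K] (n : ℕ) (Q : MvPolynomial (Fin n) K) :
    Submodule (MvPolynomial (Fin n) K) (Module.End K (MvPolynomial (Fin n) K)) where
  carrier := {θ | ∀ f, Q ∣ f → Q ∣ θ f}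
  add_mem' := by
    intro θ₁ θ₂ h₁ h₂ f hf
    simpa using dvd_add (h₁ f hf) (h₂ f hf)
  zero_mem' := by intro f hf; simp
  smul_mem' := by
    intro c θ hθ f hf
    simpa [smul_eq_mul] using Dvd.dvd.mul_left (hθ f hf) c

/-- `D^{(m)}(𝒜)`, for the arrangement defined by `Q`. -/
noncomputable def Dmod (K : Type*) [Field K] (n : ℕ) (Q : MvPolynomial (Fin n) K) (m : ℕ) :
    Submodule (MvPolynomial (Fin n) K) (Module.End K (MvPolynomial (Fin n) K)) :=
  homOrder K n m ⊓ presIdeal K n Q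

/-- The Euler operator of order `m`. -/
noncomputable def euler (K : Type*) [Field K] (n m : ℕ) :
    Module.End K (MvPolynomial (Fin n) K) :=
  ∑ α ∈ Finset.Nat.antidiagonalTuple n m,
    ((Nat.multinomial Finset.univ α : MvPolynomial (Fin n) K) *
      ∏ j, MvPolynomial.X j ^ α j) • pdOp K n α

/-- `θ` is homogeneous (of order `m`) of polynomial degree `p`. -/
def homogOfPdeg (K : Type*) [Field K] (n m p : ℕ)
    (θ : Module.End K (MvPolynomial (Fin n) K)) : Prop :=
  ∃ c : (Fin n → ℕ) → MvPolynomial (Fin n) K,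
    (∀ α, (c α).IsHomogeneous p) ∧
    θ = ∑ α ∈ Finset.Nat.antidiagonalTuple n m, c α • pdOp K n α

/-- A generic arrangement: any `n` of the defining linear forms are linearly independent. -/
def Generic {K : Type*} [Field K] {n r : ℕ} (a : Fin r → (Fin n → K)) : Prop :=
  ∀ s : Finset (Fin r), s.card = n → LinearIndependent K (fun i : s => a (i : Fin r))

/-- `P_𝓗 = ∏_{H ∉ 𝓗} p_H`. -/
noncomputable def PH {K : Type*} [Field K] {n r : ℕ} (a : Fin r → (Fin n → K))
    (H : Finset (Fin r)) : MvPolynomial (Fin n) K :=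
  ∏ i ∈ Hᶜ, lf (a i)

/-- `x^α/α!`. -/
noncomputable def monDiv (K : Type*) [Field K] (n : ℕ) (α : Fin n → ℕ) :
    MvPolynomial (Fin n) K :=
  MvPolynomial.C (((∏ j, (α j).factorial : ℕ) : K))⁻¹ * ∏ j, MvPolynomial.X j ^ α j

/-! `D^{(m)}(𝒜)` is squeezed between `Q • H_m` and `H_m`, where `H_m = homOrder K n m` is the module
of all homogeneous operators of order `m`. The `∂^α` with `|α| = m` form a basis of `H_m`, since
`∂^β x^α = α! δ_{αβ}` for `|α| = |β|`, and multiplication by `Q ≠ 0` is injective on operators; so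
both bounds on the rank equal `s_m = #{α : |α| = m}`. -/

open Finset

theorem Finset.Nat.card_antidiagonalTuple (n m : ℕ) :
    #(Nat.antidiagonalTuple n m) = (n + m - 1).choose m := by
  have h := card_finsuppAntidiag_nat_eq_choose (s := (univ : Finset (Fin n))) m
  rw [card_univ, Fintype.card_fin] at h
  rw [← h]
  refine card_nbij' Finsupp.equivFunOnFinite.symm Finsupp.equivFunOnFinite ?_ ?_
    (fun _ _ => by simp) (fun _ _ => by simp)
  · intro α hα
    simpa [mem_finsuppAntidiag] using Nat.mem_antidiagonalTuple.mp hα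
  · intro f hf
    rw [mem_coe, Nat.mem_antidiagonalTuple]
    simpa [mem_finsuppAntidiag] using hf

instance LinearMap.isTorsionFree {R S M N : Type*} [Semiring R] [Semiring S]
    [AddCommMonoid M] [AddCommMonoid N] [Module R M] [Module R N] [Module S N]
    [SMulCommClass R S N] [Module.IsTorsionFree S N] : Module.IsTorsionFree S (M →ₗ[R] N) :=
  ⟨fun _ hr _ _ h => LinearMap.ext fun x => hr.isSMulRegular (LinearMap.congr_fun h x)⟩

theorem List.sum_map_single_apply_of_notMem {σ M : Type*} [AddCommMonoid M] (f : σ → M)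
    {l : List σ} {j : σ} (hj : j ∉ l) : (l.map fun i => Finsupp.single i (f i)).sum j = 0 := by
  induction l with
  | nil => simp
  | cons i l ih =>
    rw [List.mem_cons, not_or] at hj
    simp [Ne.symm hj.1, ih hj.2]

section PartialDerivatives

variable {σ R : Type*} [CommSemiring R]

theorem pderiv_pow_monomial (j : σ) (k : ℕ) (s : σ →₀ ℕ) (a : R) :
    ((pderiv j).toLinearMap ^ k : Module.End R (MvPolynomial σ R)) (monomial s a)
      = monomial (s - Finsupp.single j k) (a * (s j).descFactorial k) := by
  induction k with
  | zero => simp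
  | succ k ih =>
    rw [pow_succ', Module.End.mul_apply, ih]
    simp only [Derivation.coeFn_coe, pderiv_monomial, Finsupp.coe_tsub, Pi.sub_apply,
      Finsupp.single_eq_same, Finsupp.single_add, Nat.descFactorial_succ, Nat.cast_mul, tsub_tsub]
    ring_nf

theorem list_prod_pderiv_pow_monomial (α : σ → ℕ) {l : List σ} (hl : l.Nodup)
    (s : σ →₀ ℕ) (a : R) :
    (l.map fun j => ((pderiv j).toLinearMap ^ α j : Module.End R (MvPolynomial σ R))).prod
        (monomial s a)
      = monomial (s - (l.map fun j => Finsupp.single j (α j)).sum)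
          (a * (l.map fun j => ((s j).descFactorial (α j) : R)).prod) := by
  induction l generalizing s a with
  | nil => simp
  | cons j l ih =>
    obtain ⟨hj, hl⟩ := List.nodup_cons.mp hl
    have hsj : (s - (l.map fun i => Finsupp.single i (α i)).sum) j = s j := by
      simp [List.sum_map_single_apply_of_notMem α hj]
    simp only [List.map_cons, List.prod_cons, List.sum_cons, Module.End.mul_apply, ih hl,
      pderiv_pow_monomial, hsj, tsub_tsub, add_comm (Finsupp.single j (α j))]
    ring_nf

end PartialDerivatives

section DifferentialOperators

variable {K : Type*} [Field K] {n : ℕ}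

theorem coeff_single_lf (v : Fin n → K) (j : Fin n) :
    coeff (Finsupp.single j 1) (lf v) = v j := by
  classical
  simp [lf, coeff_sum, coeff_C_mul, coeff_X, Finsupp.single_left_inj]

theorem lf_ne_zero {v : Fin n → K} (hv : v ≠ 0) : lf v ≠ 0 := fun h =>
  hv <| funext fun j => by rw [← coeff_single_lf v, h, coeff_zero, Pi.zero_apply]

theorem pdOp_monomial (α : Fin n → ℕ) (s : Fin n →₀ ℕ) (a : K) :
    pdOp K n α (monomial s a)
      = monomial (s - Finsupp.equivFunOnFinite.symm α)
          (a * ∏ j, ((s j).descFactorial (α j) : K)) := by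
  rw [pdOp, List.ofFn_eq_map, list_prod_pderiv_pow_monomial α (List.nodup_finRange n),
    ← List.ofFn_eq_map, ← List.ofFn_eq_map, List.sum_ofFn, List.prod_ofFn]
  congr
  ext j
  simp [Finsupp.single_apply]

theorem pdOp_monomial_self (α : Fin n → ℕ) :
    pdOp K n α (monomial (Finsupp.equivFunOnFinite.symm α) 1) =
      C (∏ j, ((α j).factorial : K)) := by
  simp [pdOp_monomial, Nat.descFactorial_self]

theorem pdOp_monomial_eq_zero {α β : Fin n → ℕ} {j : Fin n} (h : α j < β j) :
    pdOp K n β (monomial (Finsupp.equivFunOnFinite.symm α) 1) = 0 := by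
  rw [pdOp_monomial, prod_eq_zero (mem_univ j) (by simp [Nat.descFactorial_eq_zero_iff_lt.mpr h]),
    mul_zero, monomial_zero]

theorem linearIndependent_pdOp [CharZero K] (m : ℕ) :
    LinearIndependent (MvPolynomial (Fin n) K)
      (fun α : Nat.antidiagonalTuple n m => pdOp K n α) := by
  rw [linearIndependent_iff']
  intro t g hg β hβ
  have hsum : ∑ α ∈ t, g α • pdOp K n α (monomial (Finsupp.equivFunOnFinite.symm β) 1) = 0 := by
    simpa using LinearMap.congr_fun hg (monomial (Finsupp.equivFunOnFinite.symm β) 1)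
  rw [sum_eq_single_of_mem β hβ, pdOp_monomial_self, smul_eq_mul, mul_eq_zero] at hsum
  · exact hsum.resolve_right (by simp [prod_ne_zero_iff, Nat.factorial_ne_zero])
  · intro α _ hαβ
    obtain ⟨j, hj⟩ : ∃ j, (β : Fin n → ℕ) j < (α : Fin n → ℕ) j := by
      by_contra! hle
      refine hαβ (Subtype.ext (funext fun j => ?_))
      refine (sum_eq_sum_iff_of_le fun i _ => hle i).mp ?_ j (mem_univ j)
      rw [Nat.mem_antidiagonalTuple.mp α.2, Nat.mem_antidiagonalTuple.mp β.2]
    rw [pdOp_monomial_eq_zero hj, smul_zero]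

theorem homOrder_eq_span_range (m : ℕ) :
    homOrder K n m = Submodule.span (MvPolynomial (Fin n) K)
      (Set.range fun α : Nat.antidiagonalTuple n m => pdOp K n α) := by
  rw [homOrder]
  congr 1
  ext θ
  simp [Nat.mem_antidiagonalTuple, eq_comm]

theorem rank_homOrder [CharZero K] (m : ℕ) :
    Module.rank (MvPolynomial (Fin n) K) (homOrder K n m) = (n + m - 1).choose m := by
  rw [homOrder_eq_span_range, rank_span (linearIndependent_pdOp m)]
  apply Cardinal.lift_injective.{0}
  rw [Cardinal.mk_range_eq_of_injective (linearIndependent_pdOp m).injective,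
    Cardinal.mk_coe_finset, Nat.card_antidiagonalTuple, Cardinal.lift_natCast,
    Cardinal.lift_natCast]

theorem smul_mem_Dmod {Q : MvPolynomial (Fin n) K} {m : ℕ}
    {θ : Module.End K (MvPolynomial (Fin n) K)} (hθ : θ ∈ homOrder K n m) : Q • θ ∈ Dmod K n Q m :=
  ⟨Submodule.smul_mem _ Q hθ, fun f _ => dvd_mul_right Q (θ f)⟩

theorem rank_Dmod [CharZero K] {Q : MvPolynomial (Fin n) K} (hQ : Q ≠ 0) (m : ℕ) :
    Module.rank (MvPolynomial (Fin n) K) (Dmod K n Q m) = (n + m - 1).choose m := by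
  rw [← rank_homOrder (K := K) (n := n) m]
  refine le_antisymm (Submodule.rank_mono inf_le_left) ?_
  exact LinearMap.rank_le_of_injective ((Q • LinearMap.id).restrict fun _ => smul_mem_Dmod)
    fun θ θ' h => Subtype.ext (smul_right_injective _ hQ (congrArg Subtype.val h))

end DifferentialOperators

theorem rank_of_free_Dmod_general
    {K : Type*} [Field K] [CharZero K] {n r m : ℕ}
    (a : Fin r → (Fin n → K)) (ha : ∀ i, a i ≠ 0) :
    Module.rank (MvPolynomial (Fin n) K) ↥(Dmod K n (∏ i, lf (a i)) m)
      = Nat.choose (n + m - 1) m :=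
  rank_Dmod (prod_ne_zero_iff.mpr fun i _ => lf_ne_zero (ha i)) m

/-- if the `S`-module `D^{(m)}(𝒜)` is free, then its rank is
`s_m = binom(n+m-1, m)`. -/
theorem rank_of_free_Dmod
    {K : Type*} [Field K] [CharZero K] {n r m : ℕ}
    (hn : 2 ≤ n)
    (a : Fin r → (Fin n → K)) (ha : ∀ i, a i ≠ 0)
    (hdist : ∀ i j : Fin r, i ≠ j → ∀ c : K, a i ≠ c • a j)
    (hfree : Module.Free (MvPolynomial (Fin n) K) ↥(Dmod K n (∏ i, lf (a i)) m)) :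
    Module.rank (MvPolynomial (Fin n) K) ↥(Dmod K n (∏ i, lf (a i)) m)
      = Nat.choose (n + m - 1) m :=
  rank_of_free_Dmod_general a ha
end

section
/- Assume r ≥ n and A is generic. Then: (1) the set {δ_H^{r-n+1} : H ∈ A^{(n-1)}} is a K-basis of the space Σ_{|α|=r-n+1} K∂^α of constant-coefficient operators homogeneous of order r-n+1; (2) the set {P_H : H ∈ A^{(n-1)}} is a K-basis of the space S_{r-n+1} of homogeneous polynomials of degree r-n+1. -/
open MvPolynomial

/-- The `K`-vector space of constant-coefficient operators homogeneous of order `m`,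
i.e. `Σ_{|α|=m} K ∂^α`. -/
noncomputable def constOps (K : Type*) [Field K] (n m : ℕ) :
    Submodule K (Module.End K (MvPolynomial (Fin n) K)) :=
  Submodule.span K {θ | ∃ α : Fin n → ℕ, (∑ j, α j) = m ∧ θ = pdOp K n α}

/-!
Pair an operator `θ` with a polynomial `f` by `⟨θ, f⟩ = (θ f)(0)`. Since `δ_𝓗` is a derivation
sending every linear form to a constant, and `p_H` to `0` for `H ∈ 𝓗`, the Leibniz rule gives
`⟨δ_𝓗^m, P_𝓗'⟩ = m! ∏_{H ∉ 𝓗'} δ_𝓗(p_H)` for `m = r - n + 1`. For `𝓗 ≠ 𝓗'` a factor with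
`H ∈ 𝓗 \ 𝓗'` vanishes, while for `𝓗 = 𝓗'` every factor is nonzero by genericity (`𝓗 ∪ {H}`
spans and `δ_𝓗 ≠ 0`). So the pairing matrix is diagonal and invertible, both families are
linearly independent, and both spaces are spanned by `binom(r, n - 1)` elements indexed by the
multi-indices of size `m`.
-/

theorem linearIndependent_of_pairing {ι R M N : Type*} [Fintype ι] [CommRing R]
    [NoZeroDivisors R] [AddCommGroup M] [Module R M] [AddCommGroup N] [Module R N]
    (B : M →ₗ[R] N →ₗ[R] R) {u : ι → M} {w : ι → N}
    (hdiag : ∀ i, B (u i) (w i) ≠ 0) (hoff : ∀ i j, i ≠ j → B (u i) (w j) = 0) :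
    LinearIndependent R u := by
  refine Fintype.linearIndependent_iff.2 fun g hg j => ?_
  have hj := congrArg (fun x => B x (w j)) hg
  simp only [map_sum, map_smul, LinearMap.sum_apply, LinearMap.smul_apply,
    smul_eq_mul, map_zero, LinearMap.zero_apply] at hj
  rw [Finset.sum_eq_single j (fun i _ hij => by rw [hoff i j hij, mul_zero])
    (fun h => absurd (Finset.mem_univ j) h)] at hj
  exact (mul_eq_zero.1 hj).resolve_right (hdiag j)

theorem Submodule.exists_basis_of_linearIndependent_of_le_span {ι κ K V : Type*} [Fintype ι]
    [Fintype κ] [DivisionRing K] [AddCommGroup V] [Module K V] {P : Submodule K V}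
    {w : ι → V} (hli : LinearIndependent K w) (hw : ∀ i, w i ∈ P) {v : κ → V}
    (hP : P ≤ span K (Set.range v)) (hcard : Fintype.card κ ≤ Fintype.card ι) :
    ∃ b : Module.Basis ι K P, ∀ i, (b i : V) = w i := by
  have : FiniteDimensional K (span K (Set.range v)) :=
    FiniteDimensional.span_of_finite K (Set.finite_range v)
  have : FiniteDimensional K P := Submodule.finiteDimensional_of_le hP
  have hli' : LinearIndependent K fun i => (⟨w i, hw i⟩ : P) :=
    LinearIndependent.of_comp P.subtype hli
  have hrank : Module.finrank K P ≤ Fintype.card ι :=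
    (Submodule.finrank_mono hP).trans ((finrank_range_le_card v).trans hcard)
  refine ⟨basisOfLinearIndependentOfCardEqFinrank' _ hli'
    (hli'.fintype_card_le_finrank.antisymm hrank), fun i => ?_⟩
  simp

theorem List.prod_ofFn_pow_add {M : Type*} [Monoid M] :
    ∀ {k : ℕ} (D : Fin k → M), (∀ i j, Commute (D i) (D j)) → ∀ α β : Fin k → ℕ,
      (List.ofFn fun j => D j ^ (α + β) j).prod
        = (List.ofFn fun j => D j ^ α j).prod * (List.ofFn fun j => D j ^ β j).prod
  | 0, _, _, _, _ => by simp
  | k + 1, D, hD, α, β => by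
    have hcomm : Commute (List.ofFn fun j : Fin k => D j.succ ^ α j.succ).prod (D 0 ^ β 0) :=
      Commute.list_prod_left _ _ fun x hx => by
        obtain ⟨i, rfl⟩ := List.mem_ofFn.1 hx
        exact (hD i.succ 0).pow_pow _ _
    have ih : (List.ofFn fun j : Fin k => D j.succ ^ (α + β) j.succ).prod
        = (List.ofFn fun j : Fin k => D j.succ ^ α j.succ).prod
          * (List.ofFn fun j : Fin k => D j.succ ^ β j.succ).prod :=
      prod_ofFn_pow_add (fun j => D j.succ) (fun i j => hD _ _) (α ∘ Fin.succ) (β ∘ Fin.succ)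
    rw [List.ofFn_succ, List.ofFn_succ, List.ofFn_succ, List.prod_cons, List.prod_cons,
      List.prod_cons, ih, Pi.add_apply, pow_add, hcomm.mul_mul_mul_comm]

theorem List.prod_ofFn_pow_single {M : Type*} [Monoid M] :
    ∀ {k : ℕ} (D : Fin k → M) (j : Fin k),
      (List.ofFn fun i => D i ^ Pi.single j 1 i).prod = D j
  | 0, _, j => j.elim0
  | k + 1, D, j => by
    cases j using Fin.cases with
    | zero => simp [List.ofFn_succ, Pi.single_apply, Fin.succ_ne_zero]
    | succ j =>
      simp only [List.ofFn_succ, List.prod_cons, Pi.single_apply, Fin.succ_inj,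
        (Fin.succ_ne_zero j).symm, if_false, pow_zero, one_mul]
      simpa only [Pi.single_apply] using prod_ofFn_pow_single (fun i => D i.succ) j

theorem MvPolynomial.pderiv_commute {σ R : Type*} [CommRing R] (i j : σ) :
    Commute ((pderiv i).toLinearMap : Module.End R (MvPolynomial σ R)) (pderiv j).toLinearMap := by
  classical
  have h : ⁅pderiv i, pderiv j⁆ = (0 : Derivation R (MvPolynomial σ R) (MvPolynomial σ R)) :=
    derivation_ext fun k => by
      rw [Derivation.commutator_apply]
      simp [pderiv_X, Pi.single_apply, apply_ite]
  rw [commute_iff_lie_eq, ← Derivation.commutator_coe_linear_map, h]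
  rfl

theorem MvPolynomial.homogeneousSubmodule_eq_span_monomial {σ R : Type*} [Fintype σ]
    [DecidableEq σ] [CommSemiring R] (m : ℕ) :
    homogeneousSubmodule σ R m
      = Submodule.span R (Set.range fun d : (Finset.univ : Finset σ).finsuppAntidiag m =>
          monomial (d : σ →₀ ℕ) (1 : R)) := by
  rw [homogeneousSubmodule_eq_finsupp_supported, AddMonoidAlgebra.supported_eq_span_single]
  congr 1
  ext p
  simp [Finsupp.degree_eq_sum, single_eq_monomial]

section ConstOps

variable {K : Type*} [Field K] {n : ℕ}

theorem pdOp_add (α β : Fin n → ℕ) : pdOp K n (α + β) = pdOp K n α * pdOp K n β :=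
  List.prod_ofFn_pow_add _ (fun i j => pderiv_commute i j) α β

theorem pdOp_zero : pdOp K n 0 = 1 := by
  simp [pdOp]

theorem pdOp_single (j : Fin n) : pdOp K n (Pi.single j 1) = (pderiv j).toLinearMap :=
  List.prod_ofFn_pow_single _ j

theorem pdOp_mem_constOps (α : Fin n → ℕ) : pdOp K n α ∈ constOps K n (∑ j, α j) :=
  Submodule.subset_span ⟨α, rfl, rfl⟩

theorem constOps_mul_le (a b : ℕ) : constOps K n a * constOps K n b ≤ constOps K n (a + b) := by
  rw [constOps, constOps, Submodule.span_mul_span, Submodule.span_le]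
  rintro _ ⟨_, ⟨α, rfl, rfl⟩, _, ⟨β, rfl, rfl⟩, rfl⟩
  simpa [pdOp_add, Finset.sum_add_distrib] using pdOp_mem_constOps (K := K) (α + β)

theorem delOp_mem_constOps_one (d : Fin n → K) : delOp K n d ∈ constOps K n 1 := by
  refine Submodule.sum_mem _ fun j _ => Submodule.smul_mem _ _ ?_
  simpa [pdOp_single] using pdOp_mem_constOps (K := K) (Pi.single j 1)

theorem delOp_pow_mem_constOps (d : Fin n → K) (m : ℕ) :
    delOp K n d ^ m ∈ constOps K n m := by
  induction m with
  | zero => simpa [pdOp_zero] using pdOp_mem_constOps (K := K) (n := n) 0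
  | succ m ih =>
    rw [pow_succ]
    exact constOps_mul_le m 1 (Submodule.mul_mem_mul ih (delOp_mem_constOps_one d))

theorem constOps_le_span (m : ℕ) :
    constOps K n m ≤ Submodule.span K
      (Set.range fun d : (Finset.univ : Finset (Fin n)).finsuppAntidiag m => pdOp K n d) := by
  rw [constOps, Submodule.span_le]
  rintro _ ⟨α, hα, rfl⟩
  refine Submodule.subset_span ⟨⟨Finsupp.equivFunOnFinite.symm α, ?_⟩, rfl⟩
  simpa using hα

end ConstOps

theorem Derivation.pow_succ_apply_mul_of_map_map_eq_zero {R A : Type*} [CommSemiring R]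
    [CommSemiring A] [Algebra R A] (D : Derivation R A A) {a : A} (ha : D (D a) = 0)
    (b : A) (k : ℕ) :
    ((D : Module.End R A) ^ (k + 1)) (a * b)
      = a * ((D : Module.End R A) ^ (k + 1)) b
        + (k + 1) • (D a * ((D : Module.End R A) ^ k) b) := by
  induction k with
  | zero => simp [Derivation.leibniz, mul_comm]
  | succ k ih =>
    rw [pow_succ', Module.End.mul_apply, ih]
    simp only [pow_succ', Module.End.mul_apply, Derivation.coeFn_coe, map_add, map_nsmul,
      Derivation.leibniz, ha, smul_eq_mul]
    ring

section DelOp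

variable {K : Type*} [Field K] {n : ℕ}

theorem delOp_eq_derivation (d : Fin n → K) :
    delOp K n d = ((∑ j, d j • pderiv j : Derivation K (MvPolynomial (Fin n) K) _) :
      Module.End K (MvPolynomial (Fin n) K)) := by
  refine LinearMap.ext fun f => ?_
  rw [Derivation.coeFn_coe, ← Derivation.coeFnAddMonoidHom_apply, map_sum]
  simp [delOp]

theorem delOp_lf (d v : Fin n → K) : delOp K n d (lf v) = C (d ⬝ᵥ v) := by
  simp [delOp, lf, pderiv_X, Pi.single_apply, dotProduct, smul_eq_C_mul]

theorem delOp_pow_card_prod_lf {ι : Type*} (d : Fin n → K) (s : Finset ι)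
    (b : ι → Fin n → K) :
    (delOp K n d ^ s.card) (∏ i ∈ s, lf (b i))
      = C ((s.card.factorial : K) * ∏ i ∈ s, d ⬝ᵥ b i) := by
  induction s using Finset.cons_induction with
  | empty => simp
  | cons c s hc ih =>
    set D : Derivation K (MvPolynomial (Fin n) K) _ := ∑ j, d j • pderiv j
    have hdel : delOp K n d = D := delOp_eq_derivation d
    have hDC : ∀ x, D (C x) = 0 := D.map_algebraMap
    have hDlf : D (lf (b c)) = C (d ⬝ᵥ b c) := by
      rw [← Derivation.coeFn_coe, ← hdel, delOp_lf]
    rw [hdel] at ih ⊢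
    rw [Finset.card_cons, Finset.prod_cons,
      D.pow_succ_apply_mul_of_map_map_eq_zero (by rw [hDlf, hDC]), pow_succ',
      Module.End.mul_apply, ih, Derivation.coeFn_coe, hDC, hDlf, mul_zero, zero_add,
      nsmul_eq_mul, ← map_natCast (C : K →+* MvPolynomial (Fin n) K), ← C_mul, ← C_mul,
      Finset.prod_cons, Nat.factorial_succ]
    congr 1
    push_cast
    ring

end DelOp

theorem isHomogeneous_lf {K : Type*} [Field K] {n : ℕ} (v : Fin n → K) :
    (lf v).IsHomogeneous 1 :=
  IsHomogeneous.sum _ _ _ fun j _ => isHomogeneous_C_mul_X (v j) j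

theorem isHomogeneous_PH {K : Type*} [Field K] {n r : ℕ} (a : Fin r → Fin n → K)
    (H : Finset (Fin r)) : (PH a H).IsHomogeneous Hᶜ.card := by
  simpa [PH] using IsHomogeneous.prod Hᶜ _ _ fun i _ => isHomogeneous_lf (a i)

theorem Generic.dotProduct_ne_zero {K : Type*} [Field K] {n r : ℕ} {a : Fin r → Fin n → K}
    (hgen : Generic a) {H : Finset (Fin r)} (hH : H.card + 1 = n) {d : Fin n → K}
    (hd : d ≠ 0) (hdH : ∀ j ∈ H, d ⬝ᵥ a j = 0) {i : Fin r} (hi : i ∉ H) :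
    d ⬝ᵥ a i ≠ 0 := by
  intro hdi
  have hcard : (insert i H).card = n := by rw [Finset.card_insert_of_notMem hi, hH]
  let b := basisOfLinearIndependentOfCardEqFinrank' _ (hgen _ hcard)
    (by rw [Fintype.card_coe, hcard, Module.finrank_fin_fun])
  have hzero : dotProductBilin K K d = 0 := b.ext fun ⟨j, hj⟩ => by
    rcases Finset.mem_insert.1 hj with rfl | hj
    · simpa [b] using hdi
    · simpa [b] using hdH j hj
  exact hd (funext fun k => by simpa using LinearMap.congr_fun hzero (Pi.single k 1))

/-- `⟨θ, f⟩ = (θ f)(0)`; on `∂^α` and `x^β/β!` it is the Kronecker delta. -/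
noncomputable def apolarPairing (K : Type*) [Field K] (n : ℕ) :
    Module.End K (MvPolynomial (Fin n) K) →ₗ[K] MvPolynomial (Fin n) K →ₗ[K] K :=
  LinearMap.applyₗ.flip.compr₂ (lcoeff K 0)

section ApolarPairing

variable {K : Type*} [Field K] {n r : ℕ} {a : Fin r → Fin n → K}

theorem apolarPairing_delOp_pow_PH (d : Fin n → K) (H : Finset (Fin r)) :
    apolarPairing K n (delOp K n d ^ Hᶜ.card) (PH a H)
      = Hᶜ.card.factorial * ∏ i ∈ Hᶜ, d ⬝ᵥ a i := by
  simp only [apolarPairing, LinearMap.compr₂_apply, LinearMap.flip_apply,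
    LinearMap.applyₗ_apply_apply, PH, delOp_pow_card_prod_lf, lcoeff_apply, coeff_zero_C]

theorem apolarPairing_delOp_pow_PH_ne_zero [CharZero K] (hgen : Generic a)
    {H : Finset (Fin r)} (hH : H.card + 1 = n) {d : Fin n → K} (hd : d ≠ 0)
    (hdH : ∀ j ∈ H, d ⬝ᵥ a j = 0) :
    apolarPairing K n (delOp K n d ^ Hᶜ.card) (PH a H) ≠ 0 := by
  rw [apolarPairing_delOp_pow_PH]
  refine mul_ne_zero (Nat.cast_ne_zero.2 (Nat.factorial_ne_zero _)) ?_
  exact Finset.prod_ne_zero_iff.2 fun i hi =>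
    hgen.dotProduct_ne_zero hH hd hdH (Finset.mem_compl.1 hi)

theorem apolarPairing_delOp_pow_PH_eq_zero {H H' : Finset (Fin r)} {d : Fin n → K}
    (hdH : ∀ j ∈ H, d ⬝ᵥ a j = 0) (hHH' : ¬H ⊆ H') :
    apolarPairing K n (delOp K n d ^ H'ᶜ.card) (PH a H') = 0 := by
  obtain ⟨i, hiH, hiH'⟩ := Finset.not_subset.1 hHH'
  rw [apolarPairing_delOp_pow_PH, Finset.prod_eq_zero (Finset.mem_compl.2 hiH') (hdH i hiH),
    mul_zero]

end ApolarPairing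

theorem card_finsuppAntidiag_eq_card_finset_len {n r : ℕ} (hn : 1 ≤ n) (hr : n ≤ r) :
    Fintype.card ((Finset.univ : Finset (Fin n)).finsuppAntidiag (r - n + 1))
      = Fintype.card {s : Finset (Fin r) // s.card = n - 1} := by
  rw [Fintype.card_coe, Finset.card_finsuppAntidiag_nat_eq_choose, Fintype.card_finset_len,
    Finset.card_univ, Fintype.card_fin, Fintype.card_fin,
    ← Nat.choose_symm (n := r) (k := n - 1) (by omega)]
  congr 1 <;> omega

/-- for a generic arrangement with `r ≥ n`,
`{δ_𝓗^{r-n+1}}` is a `K`-basis of `Σ_{|α|=r-n+1} K∂^α` and `{P_𝓗}` is a `K`-basis of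
the space of homogeneous polynomials of degree `r-n+1`. -/
theorem dual_bases_of_generic
    {K : Type*} [Field K] [CharZero K] {n r : ℕ}
    (hn : 2 ≤ n) (hr : n ≤ r)
    (a : Fin r → (Fin n → K)) (hgen : Generic a)
    (δ : Finset (Fin r) → (Fin n → K))
    (hδ0 : ∀ H : Finset (Fin r), H.card = n - 1 → δ H ≠ 0)
    (hδ : ∀ H : Finset (Fin r), H.card = n - 1 → ∀ i ∈ H, delOp K n (δ H) (lf (a i)) = 0) :
    (∃ b : Module.Basis {s : Finset (Fin r) // s.card = n - 1} K ↥(constOps K n (r - n + 1)),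
        ∀ H, (b H : Module.End K (MvPolynomial (Fin n) K)) = delOp K n (δ H) ^ (r - n + 1))
    ∧ (∃ b : Module.Basis {s : Finset (Fin r) // s.card = n - 1} K
          ↥(MvPolynomial.homogeneousSubmodule (Fin n) K (r - n + 1)),
        ∀ H, (b H : MvPolynomial (Fin n) K) = PH a H) := by
  set m := r - n + 1
  have hcompl (H : {s : Finset (Fin r) // s.card = n - 1}) : (H : Finset (Fin r))ᶜ.card = m := by
    rw [Finset.card_compl, H.2, Fintype.card_fin]; omega
  have horth (H : {s : Finset (Fin r) // s.card = n - 1}) (i) (hi : i ∈ (H : Finset (Fin r))) :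
      δ H ⬝ᵥ a i = 0 := C_eq_zero.1 (delOp_lf (δ H) (a i) ▸ hδ H H.2 i hi)
  have hdiag (H : {s : Finset (Fin r) // s.card = n - 1}) :
      apolarPairing K n (delOp K n (δ H) ^ m) (PH a H) ≠ 0 :=
    hcompl H ▸ apolarPairing_delOp_pow_PH_ne_zero hgen (by omega) (hδ0 H H.2) (horth H)
  have hoff (H H' : {s : Finset (Fin r) // s.card = n - 1}) (hne : H ≠ H') :
      apolarPairing K n (delOp K n (δ H) ^ m) (PH a H') = 0 :=
    hcompl H' ▸ apolarPairing_delOp_pow_PH_eq_zero (horth H) fun hsub =>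
      hne (Subtype.ext (Finset.eq_of_subset_of_card_le hsub (by rw [H.2, H'.2])))
  have hcard := (card_finsuppAntidiag_eq_card_finset_len (by omega) hr).le
  exact ⟨Submodule.exists_basis_of_linearIndependent_of_le_span
      (linearIndependent_of_pairing _ hdiag hoff) (fun H => delOp_pow_mem_constOps _ m)
      (constOps_le_span m) hcard,
    Submodule.exists_basis_of_linearIndependent_of_le_span
      (linearIndependent_of_pairing (apolarPairing K n).flip hdiag fun H H' hne =>
        hoff H' H hne.symm)
      (fun H => hcompl H ▸ isHomogeneous_PH a H) (homogeneousSubmodule_eq_span_monomial m).le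
      hcard⟩
end

section
/- Let I = ⟨f_1,…,f_k⟩ be an ideal of S, R = S/I, and let φ: Ω^{[1,m]}(S) → Ω^{[1,m]}(R) be the natural surjection induced by S⊗_K S → R⊗_K R. Then, as an S-submodule of Ω^{[1,m]}(S) (with S acting via a ↦ a⊗1), Ker φ = Σ_{i, 1≤|α|≤m} S·f_i·(dx)^α + Σ_{i, 0≤|α|≤m-1} S·(df_i)·(dx)^α. -/
open scoped TensorProduct

set_option synthInstance.maxHeartbeats 1000000
set_option maxHeartbeats 1000000

namespace KerJetAux

variable {K : Type*} [Field K] {n : ℕ}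

/-- `d g = 1 ⊗ g - g ⊗ 1`. -/
noncomputable def DD (g : MvPolynomial (Fin n) K) :
    MvPolynomial (Fin n) K ⊗[K] MvPolynomial (Fin n) K :=
  1 ⊗ₜ g - g ⊗ₜ 1

variable (K n) in
/-- the augmentation ideal -/
noncomputable def JJ : Ideal (MvPolynomial (Fin n) K ⊗[K] MvPolynomial (Fin n) K) :=
  RingHom.ker (Algebra.TensorProduct.lmul' K (S := MvPolynomial (Fin n) K))

variable (K n) in
noncomputable def mu : MvPolynomial (Fin n) K ⊗[K] MvPolynomial (Fin n) K →ₐ[K]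
    MvPolynomial (Fin n) K :=
  Algebra.TensorProduct.lmul' K (S := MvPolynomial (Fin n) K)

lemma mu_tmul (a b : MvPolynomial (Fin n) K) : mu K n (a ⊗ₜ[K] b) = a * b :=
  Algebra.TensorProduct.lmul'_apply_tmul a b

lemma mem_JJ_iff (x : MvPolynomial (Fin n) K ⊗[K] MvPolynomial (Fin n) K) :
    x ∈ JJ K n ↔ mu K n x = 0 := Iff.rfl

lemma smul_def' (a : MvPolynomial (Fin n) K)
    (x : MvPolynomial (Fin n) K ⊗[K] MvPolynomial (Fin n) K) :
    a • x = (a ⊗ₜ[K] 1) * x := by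
  rw [Algebra.smul_def (A := MvPolynomial (Fin n) K ⊗[K] MvPolynomial (Fin n) K) a x,
    Algebra.TensorProduct.algebraMap_apply, Algebra.algebraMap_self_apply]

lemma DD_mem (g : MvPolynomial (Fin n) K) : DD g ∈ JJ K n := by
  rw [mem_JJ_iff, DD, map_sub, mu_tmul, mu_tmul, one_mul, mul_one, sub_self]

lemma mu_DD (g : MvPolynomial (Fin n) K) : mu K n (DD g) = 0 := DD_mem g

lemma sub_mu_mem (z : MvPolynomial (Fin n) K ⊗[K] MvPolynomial (Fin n) K) :
    z - (mu K n z) ⊗ₜ[K] 1 ∈ JJ K n := by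
  rw [mem_JJ_iff, map_sub, mu_tmul, mul_one, sub_self]

lemma DD_C (a : K) : DD (MvPolynomial.C a : MvPolynomial (Fin n) K) = 0 := by
  have h1 : (MvPolynomial.C a : MvPolynomial (Fin n) K) = a • 1 := by
    rw [← Algebra.algebraMap_eq_smul_one]; rfl
  rw [DD, h1, TensorProduct.smul_tmul, sub_self]

lemma DD_add (g h : MvPolynomial (Fin n) K) : DD (g + h) = DD g + DD h := by
  simp only [DD, TensorProduct.tmul_add, TensorProduct.add_tmul]
  ring

lemma DD_mul (g h : MvPolynomial (Fin n) K) :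
    DD (g * h) = (1 ⊗ₜ[K] g) * DD h + (h ⊗ₜ[K] 1) * DD g := by
  simp only [DD, mul_sub, Algebra.TensorProduct.tmul_mul_tmul, one_mul, mul_one, mul_comm g h]
  abel

lemma JJ_eq_span :
    JJ K n = Ideal.span (Set.range fun j : Fin n => DD (K := K) (MvPolynomial.X j)) := by
  apply le_antisymm
  · have h : JJ K n =
        Ideal.span (Set.range fun s : MvPolynomial (Fin n) K => 1 ⊗ₜ[K] s - s ⊗ₜ[K] 1) :=
      (KaehlerDifferential.span_range_eq_ideal K (MvPolynomial (Fin n) K)).symm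
    rw [h, Ideal.span_le]
    rintro _ ⟨g, rfl⟩
    show (DD g : MvPolynomial (Fin n) K ⊗[K] MvPolynomial (Fin n) K) ∈ _
    induction g using MvPolynomial.induction_on with
    | C a => rw [DD_C]; exact zero_mem _
    | add p q hp hq => rw [DD_add]; exact add_mem hp hq
    | mul_X p j hp =>
        rw [DD_mul]
        exact add_mem (Ideal.mul_mem_left _ _ (Ideal.subset_span ⟨j, rfl⟩))
          (Ideal.mul_mem_left _ _ hp)
  · rw [Ideal.span_le]
    rintro _ ⟨j, rfl⟩
    exact DD_mem _

end KerJetAux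

namespace KerJetAux

variable {K : Type*} [Field K] {n : ℕ}

noncomputable def Pw (α : Fin n → ℕ) : MvPolynomial (Fin n) K ⊗[K] MvPolynomial (Fin n) K :=
  ∏ j, (DD (K := K) (MvPolynomial.X j)) ^ (α j)

lemma Pw_zero : Pw (K := K) (n := n) 0 = 1 := by
  simp [Pw]

lemma Pw_mem (α : Fin n → ℕ) : Pw (K := K) α ∈ JJ K n ^ (∑ j, α j) := by
  classical
  rw [Pw]
  induction (Finset.univ : Finset (Fin n)) using Finset.induction with
  | empty => rw [Finset.prod_empty, Finset.sum_empty, pow_zero (JJ K n), Ideal.one_eq_top]; trivial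
  | @insert a s hj ih =>
      rw [Finset.prod_insert hj, Finset.sum_insert hj,
        pow_add (JJ K n) (α a) (∑ x ∈ s, α x)]
      exact Ideal.mul_mem_mul (Ideal.pow_mem_pow (DD_mem _) _) ih

/-- bump an exponent vector at one coordinate -/
def bump (α : Fin n → ℕ) (j : Fin n) : Fin n → ℕ :=
  fun j' => α j' + (if j' = j then 1 else 0)

lemma Pw_mul_DD_X (α : Fin n → ℕ) (j : Fin n) :
    Pw (K := K) α * DD (MvPolynomial.X j) = Pw (bump α j) := by
  classical
  rw [Pw, Pw]
  have h : ∀ j' : Fin n, (DD (K := K) (MvPolynomial.X j')) ^ (bump α j j')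
      = (DD (K := K) (MvPolynomial.X j')) ^ (α j') *
        (if j' = j then DD (K := K) (MvPolynomial.X j) else 1) := by
    intro j'
    by_cases h : j' = j
    · subst h; simp [bump, pow_add]
    · simp [bump, h]
  rw [Finset.prod_congr rfl fun j' _ => h j', Finset.prod_mul_distrib,
    Finset.prod_ite_eq' Finset.univ j fun _ => DD (K := K) (MvPolynomial.X j)]
  simp

lemma sum_bump (α : Fin n → ℕ) (j : Fin n) :
    (∑ j', bump α j j') = (∑ j', α j') + 1 := by
  classical
  simp [bump, Finset.sum_add_distrib]

end KerJetAux

namespace KerJetAux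

variable {K : Type*} [Field K] {n : ℕ}

/-- the target submodule: span of monomials `Pw α` with `P α`, plus `J^q` -/
noncomputable def NN (P : (Fin n → ℕ) → Prop) (q : ℕ) :
    Submodule (MvPolynomial (Fin n) K) (MvPolynomial (Fin n) K ⊗[K] MvPolynomial (Fin n) K) :=
  Submodule.span (MvPolynomial (Fin n) K) {x | ∃ α, P α ∧ x = Pw (K := K) α}
    ⊔ Submodule.restrictScalars (MvPolynomial (Fin n) K) (JJ K n ^ q)

lemma NN_mono {P P' : (Fin n → ℕ) → Prop} {q q' : ℕ} (hP : ∀ α, P α → P' α) (hq : q' ≤ q) :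
    NN (K := K) P q ≤ NN (K := K) P' q' := by
  apply sup_le_sup
  · exact Submodule.span_mono fun x ⟨α, h1, h2⟩ => ⟨α, hP α h1, h2⟩
  · exact fun x hx => Ideal.pow_le_pow_right hq hx

lemma mem_NN_of_pow {P : (Fin n → ℕ) → Prop} {q : ℕ} {x} (hx : x ∈ JJ K n ^ q) :
    x ∈ NN (K := K) P q := Submodule.mem_sup_right hx

lemma mem_NN_of_Pw {P : (Fin n → ℕ) → Prop} {q : ℕ} {α : Fin n → ℕ} (hα : P α) :
    Pw (K := K) α ∈ NN (K := K) P q :=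
  Submodule.mem_sup_left (Submodule.subset_span ⟨α, hα, rfl⟩)

/-- key step in the induction: multiplying a monomial `Pw α` by `d g` -/
lemma Pw_mul_DD_mem (p : ℕ) (α : Fin n → ℕ) (hα : (∑ j, α j) = p) (g : MvPolynomial (Fin n) K) :
    Pw (K := K) α * DD g ∈ NN (K := K) (fun β => (∑ j, β j) = p + 1) (p + 2) := by
  induction g using MvPolynomial.induction_on with
  | C a => rw [DD_C, mul_zero]; exact zero_mem _
  | add g h hg hh => rw [DD_add, mul_add]; exact add_mem hg hh
  | mul_X g j hg =>
      rw [DD_mul]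
      have hsplit : (1 : MvPolynomial (Fin n) K) ⊗ₜ[K] g
          = g ⊗ₜ[K] (1 : MvPolynomial (Fin n) K) + DD g := by
        rw [DD]; ring
      rw [hsplit]
      have e : Pw (K := K) α * ((g ⊗ₜ[K] (1 : MvPolynomial (Fin n) K) + DD g) *
            DD (MvPolynomial.X j) + (MvPolynomial.X j ⊗ₜ[K] (1 : MvPolynomial (Fin n) K)) * DD g)
          = g • (Pw (K := K) α * DD (MvPolynomial.X j))
            + Pw (K := K) α * (DD g * DD (MvPolynomial.X j))
            + (MvPolynomial.X j : MvPolynomial (Fin n) K) • (Pw (K := K) α * DD g) := by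
        rw [smul_def', smul_def']; ring
      rw [e]
      refine add_mem (add_mem ?_ ?_) ?_
      · rw [Pw_mul_DD_X]
        exact Submodule.smul_mem _ _ (mem_NN_of_Pw (by rw [sum_bump, hα]))
      · apply mem_NN_of_pow
        have h1 : Pw (K := K) α ∈ JJ K n ^ p := hα ▸ Pw_mem α
        have h2 : DD g * DD (MvPolynomial.X j) ∈ JJ K n * JJ K n :=
          Ideal.mul_mem_mul (DD_mem g) (DD_mem _)
        have : Pw (K := K) α * (DD g * DD (MvPolynomial.X j)) ∈ JJ K n ^ p * (JJ K n * JJ K n) :=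
          Ideal.mul_mem_mul h1 h2
        refine Set.mem_of_mem_of_subset this ?_
        rw [show JJ K n ^ p * (JJ K n * JJ K n) = JJ K n ^ (p + 2) by ring]
      · exact Submodule.smul_mem _ _ hg

end KerJetAux

namespace KerJetAux

variable {K : Type*} [Field K] {n : ℕ}

lemma span_mul_JJ_mem (p : ℕ)
    (s : MvPolynomial (Fin n) K ⊗[K] MvPolynomial (Fin n) K)
    (hs : s ∈ Submodule.span (MvPolynomial (Fin n) K)
      {x | ∃ α, (∑ j, α j) = p ∧ x = Pw (K := K) α})
    (y : MvPolynomial (Fin n) K ⊗[K] MvPolynomial (Fin n) K) (hy : y ∈ JJ K n) :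
    s * y ∈ NN (K := K) (fun β => (∑ j, β j) = p + 1) (p + 2) := by
  induction hs using Submodule.span_induction with
  | mem x hx =>
      obtain ⟨α, hα, rfl⟩ := hx
      -- now use the S-module generation of JJ
      have hy' : y ∈ Submodule.span (MvPolynomial (Fin n) K)
          (Set.range fun s : MvPolynomial (Fin n) K => 1 ⊗ₜ[K] s - s ⊗ₜ[K] 1) := by
        rw [KaehlerDifferential.submodule_span_range_eq_ideal]
        exact hy
      clear hy
      induction hy' using Submodule.span_induction with
      | mem w hw =>
          obtain ⟨g, rfl⟩ := hw
          exact Pw_mul_DD_mem p α hα g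
      | zero => rw [mul_zero]; exact zero_mem _
      | add u v hu hv hu' hv' => rw [mul_add]; exact add_mem hu' hv'
      | smul a u hu hu' => rw [mul_smul_comm]; exact Submodule.smul_mem _ _ hu'
  | zero => rw [zero_mul]; exact zero_mem _
  | add u v hu hv hu' hv' => rw [add_mul]; exact add_mem hu' hv'
  | smul a u hu hu' => rw [smul_mul_assoc]; exact Submodule.smul_mem _ _ hu'

/-- one step of the filtration: `J^p ⊆ span{Pw α : |α| = p} + J^(p+1)` -/
lemma stepC (p : ℕ) (z : MvPolynomial (Fin n) K ⊗[K] MvPolynomial (Fin n) K)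
    (hz : z ∈ JJ K n ^ p) :
    z ∈ NN (K := K) (fun α => (∑ j, α j) = p) (p + 1) := by
  induction p generalizing z with
  | zero =>
      have hdecomp : z = (mu K n z) • Pw (K := K) (0 : Fin n → ℕ)
          + (z - (mu K n z) ⊗ₜ[K] 1) := by
        rw [Pw_zero, smul_def', mul_one]; ring
      rw [hdecomp]
      refine add_mem ?_ ?_
      · exact Submodule.smul_mem _ _ (mem_NN_of_Pw (by simp))
      · apply mem_NN_of_pow
        rw [pow_one (JJ K n)]
        exact sub_mu_mem z
  | succ p ih =>
      rw [pow_succ (JJ K n) p] at hz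
      refine Submodule.mul_induction_on hz (fun x hx y hy => ?_) (fun u v hu hv => add_mem hu hv)
      obtain ⟨s, hs, j, hj, rfl⟩ := Submodule.mem_sup.1 (ih x hx)
      rw [add_mul]
      refine add_mem (span_mul_JJ_mem p s hs y hy) (mem_NN_of_pow ?_)
      have : j * y ∈ JJ K n ^ (p + 1) * JJ K n := Ideal.mul_mem_mul hj hy
      rwa [← pow_succ (JJ K n) (p + 1)] at this

/-- telescoped: `J^p ⊆ span{Pw α : p ≤ |α| < p + t} + J^(p+t)` -/
lemma teleT (t p : ℕ) (z : MvPolynomial (Fin n) K ⊗[K] MvPolynomial (Fin n) K)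
    (hz : z ∈ JJ K n ^ p) :
    z ∈ NN (K := K) (fun α => p ≤ (∑ j, α j) ∧ (∑ j, α j) < p + t) (p + t) := by
  induction t generalizing p z with
  | zero => exact mem_NN_of_pow hz
  | succ t ih =>
      obtain ⟨s, hs, j, hj, rfl⟩ := Submodule.mem_sup.1 (stepC p z hz)
      refine add_mem ?_ ?_
      · refine Submodule.mem_sup_left (Submodule.span_mono ?_ hs)
        rintro x ⟨α, hα, rfl⟩
        exact ⟨α, ⟨le_of_eq hα.symm, by omega⟩, rfl⟩
      · have := ih (p + 1) j hj
        refine NN_mono (fun α h => ⟨by omega, by omega⟩) (by omega) this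

end KerJetAux

namespace KerJetAux

variable {K : Type*} [Field K] {n : ℕ}

lemma keyA (m : ℕ) (z : MvPolynomial (Fin n) K ⊗[K] MvPolynomial (Fin n) K) :
    z ∈ NN (K := K) (fun α => (∑ j, α j) ≤ m) (m + 1) := by
  have h0 : z ∈ JJ K n ^ 0 := by
    rw [pow_zero (JJ K n), Ideal.one_eq_top]; trivial
  have := teleT (m + 1) 0 z h0
  exact NN_mono (fun α h => by omega) (by omega) this

lemma keyB (m : ℕ) (z : MvPolynomial (Fin n) K ⊗[K] MvPolynomial (Fin n) K)
    (hz : z ∈ JJ K n) :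
    z ∈ NN (K := K) (fun α => 1 ≤ (∑ j, α j) ∧ (∑ j, α j) ≤ m) (m + 1) := by
  have h1 : z ∈ JJ K n ^ 1 := by rw [pow_one (JJ K n)]; exact hz
  have := teleT m 1 z h1
  exact NN_mono (fun α h => by omega) (by omega) this

end KerJetAux

namespace KerJetAux

variable {K : Type*} [Field K] {n : ℕ}

variable (K n) in
/-- the projection `S ⊗ S → (S/I) ⊗ (S/I)` -/
noncomputable def piI (I : Ideal (MvPolynomial (Fin n) K)) :
    MvPolynomial (Fin n) K ⊗[K] MvPolynomial (Fin n) K →ₐ[K]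
      (MvPolynomial (Fin n) K ⧸ I) ⊗[K] (MvPolynomial (Fin n) K ⧸ I) :=
  Algebra.TensorProduct.map (Ideal.Quotient.mkₐ K I) (Ideal.Quotient.mkₐ K I)

lemma piI_tmul (I : Ideal (MvPolynomial (Fin n) K)) (a b : MvPolynomial (Fin n) K) :
    piI K n I (a ⊗ₜ[K] b) = (Ideal.Quotient.mk I a) ⊗ₜ[K] (Ideal.Quotient.mk I b) := rfl

lemma piI_comm (I : Ideal (MvPolynomial (Fin n) K))
    (u : MvPolynomial (Fin n) K ⊗[K] MvPolynomial (Fin n) K) :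
    Algebra.TensorProduct.lmul' K (S := MvPolynomial (Fin n) K ⧸ I) (piI K n I u)
      = Ideal.Quotient.mk I (mu K n u) := by
  induction u using TensorProduct.induction_on with
  | zero => simp
  | tmul a b =>
      rw [piI_tmul, Algebra.TensorProduct.lmul'_apply_tmul, mu_tmul, map_mul]
  | add x y hx hy => rw [map_add, map_add, map_add, hx, hy, map_add]

lemma piI_surj (I : Ideal (MvPolynomial (Fin n) K)) : Function.Surjective (piI K n I) := by
  intro w
  induction w using TensorProduct.induction_on with
  | zero => exact ⟨0, map_zero _⟩
  | tmul a b =>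
      obtain ⟨a', rfl⟩ := Ideal.Quotient.mk_surjective a
      obtain ⟨b', rfl⟩ := Ideal.Quotient.mk_surjective b
      exact ⟨a' ⊗ₜ b', rfl⟩
  | add x y hx hy =>
      obtain ⟨x', hx'⟩ := hx
      obtain ⟨y', hy'⟩ := hy
      exact ⟨x' + y', by rw [map_add, hx', hy']⟩

lemma JR_eq_map (I : Ideal (MvPolynomial (Fin n) K)) :
    RingHom.ker (Algebra.TensorProduct.lmul' K (S := MvPolynomial (Fin n) K ⧸ I))
      = Ideal.map (piI K n I) (JJ K n) := by
  apply le_antisymm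
  · intro w hw
    obtain ⟨v, rfl⟩ := piI_surj I w
    have hmk : Ideal.Quotient.mk I (mu K n v) = 0 := by
      rw [← piI_comm I v]; exact hw
    have hv' : v - (mu K n v) ⊗ₜ[K] 1 ∈ JJ K n := sub_mu_mem v
    have heq : piI K n I (v - (mu K n v) ⊗ₜ[K] 1) = piI K n I v := by
      rw [map_sub, piI_tmul, hmk, TensorProduct.zero_tmul, sub_zero]
    rw [← heq]
    exact Ideal.mem_map_of_mem _ hv'
  · rw [Ideal.map_le_iff_le_comap]
    intro u hu
    have : mu K n u = 0 := hu
    show Algebra.TensorProduct.lmul' K (piI K n I u) = 0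
    rw [piI_comm, this, map_zero]

lemma ker_piI {k : ℕ} (f : Fin k → MvPolynomial (Fin n) K)
    (I : Ideal (MvPolynomial (Fin n) K)) (hI : I = Ideal.span (Set.range f)) :
    RingHom.ker (piI K n I) = Ideal.span (Set.range (Sum.elim
      (fun i => (f i) ⊗ₜ[K] (1 : MvPolynomial (Fin n) K))
      (fun i => DD (f i)))) := by
  rw [Set.Sum.elim_range]
  have h1 := Algebra.TensorProduct.map_ker (Ideal.Quotient.mkₐ K I) (Ideal.Quotient.mkₐ K I)
    Ideal.Quotient.mk_surjective Ideal.Quotient.mk_surjective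
  have hk : RingHom.ker (Ideal.Quotient.mkₐ K I) = I := by
    ext x
    simp [RingHom.mem_ker, Ideal.Quotient.eq_zero_iff_mem]
  rw [hk] at h1
  have h2 : RingHom.ker (piI K n I) = Ideal.span
      (Set.range (fun i => (f i) ⊗ₜ[K] (1 : MvPolynomial (Fin n) K)) ∪
       Set.range (fun i => (1 : MvPolynomial (Fin n) K) ⊗ₜ[K] (f i))) := by
    rw [show RingHom.ker (piI K n I) = RingHom.ker (Algebra.TensorProduct.map
        (Ideal.Quotient.mkₐ K I) (Ideal.Quotient.mkₐ K I)) from rfl, h1, hI,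
      Ideal.map_span, Ideal.map_span, ← Ideal.span_union, ← Set.range_comp, ← Set.range_comp]
    rfl
  rw [h2]
  apply le_antisymm <;> rw [Ideal.span_le] <;> rintro x (⟨i, rfl⟩ | ⟨i, rfl⟩)
  · exact Ideal.subset_span (Or.inl ⟨i, rfl⟩)
  · have he : (1 : MvPolynomial (Fin n) K) ⊗ₜ[K] (f i)
        = (f i) ⊗ₜ[K] (1 : MvPolynomial (Fin n) K) + DD (f i) := by
      rw [show DD (f i) = 1 ⊗ₜ[K] (f i) - (f i) ⊗ₜ[K] 1 from rfl]; ring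
    show (1 : MvPolynomial (Fin n) K) ⊗ₜ[K] (f i) ∈ _
    rw [he]
    exact add_mem (Ideal.subset_span (Or.inl ⟨i, rfl⟩)) (Ideal.subset_span (Or.inr ⟨i, rfl⟩))
  · exact Ideal.subset_span (Or.inl ⟨i, rfl⟩)
  · show DD (f i) ∈ _
    rw [show DD (f i) = 1 ⊗ₜ[K] (f i) - (f i) ⊗ₜ[K] 1 from rfl]
    exact sub_mem (Ideal.subset_span (Or.inr ⟨i, rfl⟩)) (Ideal.subset_span (Or.inl ⟨i, rfl⟩))

end KerJetAux

namespace KerJetAux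

variable {K : Type*} [Field K] {n : ℕ}

lemma mul_tmul_term_mem (m : ℕ) (g : MvPolynomial (Fin n) K)
    (y : MvPolynomial (Fin n) K ⊗[K] MvPolynomial (Fin n) K) (hy : y ∈ JJ K n)
    (M : Submodule (MvPolynomial (Fin n) K)
      (MvPolynomial (Fin n) K ⊗[K] MvPolynomial (Fin n) K))
    (hM : ∀ α : Fin n → ℕ, 1 ≤ (∑ j, α j) → (∑ j, α j) ≤ m → g • Pw (K := K) α ∈ M) :
    y * (g ⊗ₜ[K] 1) ∈ M ⊔ Submodule.restrictScalars (MvPolynomial (Fin n) K)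
      (JJ K n ^ (m + 1)) := by
  obtain ⟨s, hs, j, hj, rfl⟩ := Submodule.mem_sup.1 (keyB m y hy)
  clear hy
  rw [add_mul]
  refine add_mem ?_ (Submodule.mem_sup_right (Ideal.mul_mem_right _ _ hj))
  induction hs using Submodule.span_induction with
  | mem x hx =>
      obtain ⟨α, ⟨h1, h2⟩, rfl⟩ := hx
      have : Pw (K := K) α * (g ⊗ₜ[K] 1) = g • Pw (K := K) α := by
        rw [smul_def', mul_comm]
      rw [this]
      exact Submodule.mem_sup_left (hM α h1 h2)
  | zero => rw [zero_mul]; exact zero_mem _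
  | add u v hu hv hu' hv' => rw [add_mul]; exact add_mem hu' hv'
  | smul a u hu hu' => rw [smul_mul_assoc]; exact Submodule.smul_mem _ _ hu'

lemma mul_DD_term_mem (m : ℕ) (g : MvPolynomial (Fin n) K)
    (y : MvPolynomial (Fin n) K ⊗[K] MvPolynomial (Fin n) K)
    (M : Submodule (MvPolynomial (Fin n) K)
      (MvPolynomial (Fin n) K ⊗[K] MvPolynomial (Fin n) K))
    (hM : ∀ α : Fin n → ℕ, (∑ j, α j) ≤ m - 1 → DD g * Pw (K := K) α ∈ M) :
    y * DD g ∈ M ⊔ Submodule.restrictScalars (MvPolynomial (Fin n) K)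
      (JJ K n ^ (m + 1)) := by
  obtain ⟨s, hs, j, hj, rfl⟩ := Submodule.mem_sup.1 (keyA m y)
  rw [add_mul]
  refine add_mem ?_ (Submodule.mem_sup_right (Ideal.mul_mem_right _ _ hj))
  induction hs using Submodule.span_induction with
  | mem x hx =>
      obtain ⟨α, hα, rfl⟩ := hx
      by_cases hcase : (∑ j, α j) ≤ m - 1
      · rw [mul_comm]
        exact Submodule.mem_sup_left (hM α hcase)
      · have hm : (∑ j, α j) = m := by omega
        refine Submodule.mem_sup_right ?_
        have h1 : Pw (K := K) α ∈ JJ K n ^ m := hm ▸ Pw_mem α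
        have := Ideal.mul_mem_mul h1 (DD_mem g)
        rwa [← pow_succ (JJ K n) m] at this
  | zero => rw [zero_mul]; exact zero_mem _
  | add u v hu hv hu' hv' => rw [add_mul]; exact add_mem hu' hv'
  | smul a u hu hu' => rw [smul_mul_assoc]; exact Submodule.smul_mem _ _ hu'

end KerJetAux

/-- for an ideal `I = ⟨f₁,…,f_k⟩` of `S = K[x₁,…,x_n]`, `R = S/I`,
and the natural surjection `φ : Ω^{[1,m]}(S) → Ω^{[1,m]}(R)` of `m`-jet modules,
`Ker φ = Σ_{i, 1≤|α|≤m} S·f_i·(dx)^α + Σ_{i, 0≤|α|≤m-1} S·(df_i)·(dx)^α`.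

Here `Ω^{[1,m]}(T) = J_T/J_T^{m+1}` where `J_T = Ker(T ⊗_K T → T)`.  We state the claim
elementwise upstairs in `S ⊗[K] S`: for `z ∈ J_S`, the image of `z` in `Ω^{[1,m]}(S)` lies
in `Ker φ` — i.e. `π z ∈ J_R^{m+1}`, where `π : S ⊗ S → R ⊗ R` — if and only if `z` lies in
the indicated `S`-submodule of `S ⊗[K] S` up to `J_S^{m+1}`, with `da = 1⊗a - a⊗1` and the
`S`-action through `a ↦ a ⊗ 1`. -/
theorem ker_jet_projection
    {K : Type*} [Field K] [CharZero K] {n k m : ℕ}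
    (f : Fin k → MvPolynomial (Fin n) K)
    (I : Ideal (MvPolynomial (Fin n) K)) (hI : I = Ideal.span (Set.range f))
    (J : Ideal (MvPolynomial (Fin n) K ⊗[K] MvPolynomial (Fin n) K))
    (hJ : J = RingHom.ker (Algebra.TensorProduct.lmul' K (S := MvPolynomial (Fin n) K)))
    (JR : Ideal ((MvPolynomial (Fin n) K ⧸ I) ⊗[K] (MvPolynomial (Fin n) K ⧸ I)))
    (hJR : JR = RingHom.ker
      (Algebra.TensorProduct.lmul' K (S := MvPolynomial (Fin n) K ⧸ I)))
    (π : MvPolynomial (Fin n) K ⊗[K] MvPolynomial (Fin n) K →ₐ[K]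
      (MvPolynomial (Fin n) K ⧸ I) ⊗[K] (MvPolynomial (Fin n) K ⧸ I))
    (hπ : π = Algebra.TensorProduct.map (Ideal.Quotient.mkₐ K I) (Ideal.Quotient.mkₐ K I))
    (d : MvPolynomial (Fin n) K → MvPolynomial (Fin n) K ⊗[K] MvPolynomial (Fin n) K)
    (hd : ∀ g, d g = 1 ⊗ₜ g - g ⊗ₜ 1)
    (z : MvPolynomial (Fin n) K ⊗[K] MvPolynomial (Fin n) K) (hz : z ∈ J) :
    π z ∈ JR ^ (m + 1) ↔
      z ∈ Submodule.span (MvPolynomial (Fin n) K)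
            ({y | ∃ (i : Fin k) (α : Fin n → ℕ), 1 ≤ (∑ j, α j) ∧ (∑ j, α j) ≤ m ∧
                y = f i • ∏ j, (d (MvPolynomial.X j)) ^ (α j)} ∪
             {y | ∃ (i : Fin k) (α : Fin n → ℕ), (∑ j, α j) ≤ m - 1 ∧
                y = d (f i) * ∏ j, (d (MvPolynomial.X j)) ^ (α j)})
          ⊔ Submodule.restrictScalars (MvPolynomial (Fin n) K)
              (J ^ (m + 1) : Ideal (MvPolynomial (Fin n) K ⊗[K] MvPolynomial (Fin n) K)) := by
  classical
  have hJ' : J = KerJetAux.JJ K n := hJ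
  have hπ' : π = KerJetAux.piI K n I := hπ
  subst hJ' hπ'
  subst hJR
  have hDD : ∀ g : MvPolynomial (Fin n) K,
      (1 : MvPolynomial (Fin n) K) ⊗ₜ[K] g - g ⊗ₜ[K] (1 : MvPolynomial (Fin n) K)
        = KerJetAux.DD g := fun _ => rfl
  have hPw : ∀ α : Fin n → ℕ,
      (∏ j, (KerJetAux.DD (K := K) (MvPolynomial.X j)) ^ (α j)) = KerJetAux.Pw (K := K) α :=
    fun _ => rfl
  simp only [hd, hDD, hPw]
  constructor
  · intro h
    have h2 : KerJetAux.piI K n I z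
        ∈ Ideal.map (KerJetAux.piI K n I) (KerJetAux.JJ K n ^ (m + 1)) := by
      have hmp : Ideal.map (KerJetAux.piI K n I) (KerJetAux.JJ K n ^ (m + 1))
          = Ideal.map (KerJetAux.piI K n I) (KerJetAux.JJ K n) ^ (m + 1) :=
        Ideal.map_pow (KerJetAux.piI K n I) (KerJetAux.JJ K n) (m + 1)
      rw [hmp, ← KerJetAux.JR_eq_map I]
      exact h
    have h3 := Ideal.mem_comap.2 h2
    rw [Ideal.comap_map_of_surjective _ (KerJetAux.piI_surj I)] at h3
    obtain ⟨u, hu, w, hw, hzw⟩ := Submodule.mem_sup.1 h3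
    have hw0 : w ∈ RingHom.ker (KerJetAux.piI K n I) := hw
    have hwJ : w ∈ KerJetAux.JJ K n := by
      have hwzu : w = z - u := by rw [← hzw]; ring
      rw [hwzu]
      exact sub_mem hz (Ideal.pow_le_self (Nat.succ_ne_zero m) hu)
    rw [KerJetAux.ker_piI f I hI, Ideal.mem_span_range_iff_exists_fun] at hw0
    obtain ⟨c, hc⟩ := hw0
    rw [Fintype.sum_sum_type] at hc
    simp only [Sum.elim_inl, Sum.elim_inr] at hc
    have hkey : ∀ i : Fin k, c (Sum.inl i) * (f i ⊗ₜ[K] (1 : MvPolynomial (Fin n) K))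
        = (KerJetAux.mu K n (c (Sum.inl i)) * f i) ⊗ₜ[K] (1 : MvPolynomial (Fin n) K)
          + (c (Sum.inl i) - (KerJetAux.mu K n (c (Sum.inl i))) ⊗ₜ[K] 1)
              * (f i ⊗ₜ[K] (1 : MvPolynomial (Fin n) K)) := by
      intro i
      rw [sub_mul, Algebra.TensorProduct.tmul_mul_tmul, mul_one]
      ring
    have hcsplit : w = (∑ i, KerJetAux.mu K n (c (Sum.inl i)) * f i)
          ⊗ₜ[K] (1 : MvPolynomial (Fin n) K)
        + ∑ i, (c (Sum.inl i) - (KerJetAux.mu K n (c (Sum.inl i))) ⊗ₜ[K] 1)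
            * (f i ⊗ₜ[K] (1 : MvPolynomial (Fin n) K))
        + ∑ i, c (Sum.inr i) * KerJetAux.DD (f i) := by
      have e : ∑ i, c (Sum.inl i) * (f i ⊗ₜ[K] (1 : MvPolynomial (Fin n) K))
          = ∑ i, ((KerJetAux.mu K n (c (Sum.inl i)) * f i) ⊗ₜ[K] (1 : MvPolynomial (Fin n) K)
            + (c (Sum.inl i) - (KerJetAux.mu K n (c (Sum.inl i))) ⊗ₜ[K] 1)
              * (f i ⊗ₜ[K] (1 : MvPolynomial (Fin n) K))) :=
        Finset.sum_congr rfl fun i _ => hkey i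
      rw [e, Finset.sum_add_distrib, ← TensorProduct.sum_tmul] at hc
      exact hc.symm
    have hB : (∑ i, KerJetAux.mu K n (c (Sum.inl i)) * f i) = 0 := by
      have h0 : KerJetAux.mu K n w = 0 := hwJ
      have hmu := congrArg (KerJetAux.mu K n) hcsplit
      rw [h0, map_add, map_add, KerJetAux.mu_tmul, mul_one, map_sum, map_sum] at hmu
      have e1 : ∀ i : Fin k, KerJetAux.mu K n
          ((c (Sum.inl i) - (KerJetAux.mu K n (c (Sum.inl i))) ⊗ₜ[K] 1)
            * (f i ⊗ₜ[K] (1 : MvPolynomial (Fin n) K))) = 0 := by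
        intro i
        rw [map_mul,
          show KerJetAux.mu K n (c (Sum.inl i) - (KerJetAux.mu K n (c (Sum.inl i))) ⊗ₜ[K] 1) = 0
            from KerJetAux.sub_mu_mem _, zero_mul]
      have e2 : ∀ i : Fin k, KerJetAux.mu K n (c (Sum.inr i) * KerJetAux.DD (f i)) = 0 := by
        intro i; rw [map_mul, KerJetAux.mu_DD, mul_zero]
      rw [Finset.sum_congr rfl (fun i _ => e1 i), Finset.sum_congr rfl (fun i _ => e2 i)] at hmu
      simpa using hmu.symm
    rw [hB, TensorProduct.zero_tmul, zero_add] at hcsplit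
    rw [← hzw]
    refine add_mem (Submodule.mem_sup_right hu) ?_
    rw [hcsplit]
    refine add_mem (Submodule.sum_mem _ fun i _ => ?_) (Submodule.sum_mem _ fun i _ => ?_)
    · exact KerJetAux.mul_tmul_term_mem m (f i) _ (KerJetAux.sub_mu_mem _) _
        (fun α h1 h2 => Submodule.subset_span (Or.inl ⟨i, α, h1, h2, rfl⟩))
    · exact KerJetAux.mul_DD_term_mem m (f i) _ _
        (fun α h1 => Submodule.subset_span (Or.inr ⟨i, α, h1, rfl⟩))
  · intro h
    obtain ⟨s, hsM, j, hj, hzsum⟩ := Submodule.mem_sup.1 h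
    have hfmem : ∀ i, f i ∈ I := by
      intro i; rw [hI]; exact Ideal.subset_span ⟨i, rfl⟩
    have hfI : ∀ i, KerJetAux.piI K n I (f i ⊗ₜ[K] (1 : MvPolynomial (Fin n) K)) = 0 := by
      intro i
      rw [KerJetAux.piI_tmul, Ideal.Quotient.eq_zero_iff_mem.2 (hfmem i),
        TensorProduct.zero_tmul]
    have hfDD : ∀ i, KerJetAux.piI K n I (KerJetAux.DD (f i)) = 0 := by
      intro i
      rw [show KerJetAux.DD (f i) = (1 : MvPolynomial (Fin n) K) ⊗ₜ[K] (f i)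
          - (f i) ⊗ₜ[K] (1 : MvPolynomial (Fin n) K) from rfl, map_sub, KerJetAux.piI_tmul,
        KerJetAux.piI_tmul, Ideal.Quotient.eq_zero_iff_mem.2 (hfmem i),
        TensorProduct.zero_tmul, TensorProduct.tmul_zero, sub_zero]
    have hs0 : KerJetAux.piI K n I s = 0 := by
      have hle : Submodule.span (MvPolynomial (Fin n) K)
            ({y | ∃ (i : Fin k) (α : Fin n → ℕ), 1 ≤ (∑ j, α j) ∧ (∑ j, α j) ≤ m ∧
                y = f i • KerJetAux.Pw (K := K) α} ∪
             {y | ∃ (i : Fin k) (α : Fin n → ℕ), (∑ j, α j) ≤ m - 1 ∧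
                y = KerJetAux.DD (f i) * KerJetAux.Pw (K := K) α})
          ≤ Submodule.restrictScalars (MvPolynomial (Fin n) K)
              (RingHom.ker (KerJetAux.piI K n I)) := by
        rw [Submodule.span_le]
        rintro x (⟨i, α, h1, h2, rfl⟩ | ⟨i, α, h1, rfl⟩)
        · show f i • KerJetAux.Pw (K := K) α ∈ RingHom.ker (KerJetAux.piI K n I)
          rw [KerJetAux.smul_def']
          exact Ideal.mul_mem_right _ _ (RingHom.mem_ker.2 (hfI i))
        · show KerJetAux.DD (f i) * KerJetAux.Pw (K := K) α ∈ RingHom.ker (KerJetAux.piI K n I)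
          exact Ideal.mul_mem_right _ _ (RingHom.mem_ker.2 (hfDD i))
      exact hle hsM
    rw [← hzsum, map_add, hs0, zero_add]
    have hmap : KerJetAux.piI K n I j
        ∈ Ideal.map (KerJetAux.piI K n I) (KerJetAux.JJ K n ^ (m + 1)) :=
      Ideal.mem_map_of_mem _ hj
    have hmp : Ideal.map (KerJetAux.piI K n I) (KerJetAux.JJ K n ^ (m + 1))
        = Ideal.map (KerJetAux.piI K n I) (KerJetAux.JJ K n) ^ (m + 1) :=
      Ideal.map_pow (KerJetAux.piI K n I) (KerJetAux.JJ K n) (m + 1)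
    rwa [hmp, ← KerJetAux.JR_eq_map I] at hmap
end
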